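/- Let Q be any set of entailments. For every Q-preantecedent p there exists a saturated Q-preantecedent q with p ⊑_i q (i.e., p can evolve, via a possibly empty sequence of legal input events, to a saturated Q-preantecedent). -/

import Mathlib

/-!
Input events are never in need of justification, so a non-saturated
preantecedent can always be extended by one legal input: some channel is stuck
at a flow state expecting input, and such a state has a component that is not a
source. Each extension lengthens a channel behaviour, and the length of a
behaviour is bounded by the size of its protocol, so the process terminates at
a saturated preantecedent.
-/

namespace Stmt7

/-- Protocols over a set of atoms `At`: atoms, coproducts and products of
finite families (events are represented by positions in the list). -/
inductive Proto (At : Type) : Type where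
  | atom : At → Proto At
  | sum : List (Proto At) → Proto At
  | prod : List (Proto At) → Proto At

/-- The three roles a protocol state may have. -/
inductive Role : Type where
  | src  -- source role 0
  | snk  -- sink role 1
  | flow -- flow role +
deriving DecidableEq

/-- Interchanging the source and sink roles. -/
def Role.swap : Role → Role
  | .src => .snk
  | .snk => .src
  | .flow => .flow

/-- The role of a coproduct state, from the roles of its components. -/
def sumRole (rs : List Role) : Role :=
  if ∀ r ∈ rs, r = Role.src then .src
  else if rs.count Role.snk = 1 ∧ rs.count Role.flow = 0 then .snk
  else .flow

/-- The role of a product state, from the roles of its components. -/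
def prodRole (rs : List Role) : Role :=
  if ∀ r ∈ rs, r = Role.snk then .snk
  else if rs.count Role.src = 1 ∧ rs.count Role.flow = 0 then .src
  else .flow

mutual
/-- The role of a protocol state on a domain channel. -/
def roleD {At : Type} : Proto At → Role
  | .atom _ => .flow
  | .sum Xs => sumRole (rolesD Xs)
  | .prod Xs => prodRole (rolesD Xs)

def rolesD {At : Type} : List (Proto At) → List Role
  | [] => []
  | X :: Xs => roleD X :: rolesD Xs
end

/-- A channel is either a domain channel or a codomain channel. -/
inductive Side : Type where
  | dom
  | cod
deriving DecidableEq

/-- The role of a protocol state on a channel of the given side (codomain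
roles are computed dually). -/
def role {At : Type} : Side → Proto At → Role
  | .dom, X => roleD X
  | .cod, X => (roleD X).swap

/-- Directions of events: input or output. -/
inductive Dir : Type where
  | inp
  | out
deriving DecidableEq

def Dir.flip : Dir → Dir
  | .inp => .out
  | .out => .inp

/-- An event: a direction together with the position of the selected
component. -/
abbrev Ev : Type := Dir × ℕ

/-- The subprotocol reached by a transition along event `i`. -/
def Proto.next {At : Type} : Proto At → ℕ → Option (Proto At)
  | .atom _, _ => none
  | .sum Xs, i => Xs[i]?
  | .prod Xs, i => Xs[i]?

/-- The direction of events a protocol state expects, on a channel of the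
given side (coproducts expect inputs on domain channels and outputs on
codomain channels; products dually). -/
def expects {At : Type} (s : Side) : Proto At → Option Dir
  | .sum _ => some (match s with | .dom => .inp | .cod => .out)
  | .prod _ => some (match s with | .dom => .out | .cod => .inp)
  | .atom _ => none

/-- A legal transition of a protocol state on a channel of side `s`: it starts
at a state with flow role, has the direction the state expects, and an output
transition does not end at a sink-role state while an input transition does
not end at a source-role state. -/
def StepP {At : Type} (s : Side) (P : Proto At) (e : Ev) (P' : Proto At) : Prop :=
  role s P = .flow ∧ expects s P = some e.1 ∧ P.next e.2 = some P' ∧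
    (e.1 = Dir.out → role s P' ≠ .snk) ∧ (e.1 = Dir.inp → role s P' ≠ .src)

/-- A legal channel behaviour: a finite sequence of legal transitions,
reaching the indicated state. -/
inductive StepsP {At : Type} (s : Side) : Proto At → List Ev → Proto At → Prop where
  | nil (P : Proto At) : StepsP s P [] P
  | cons {P P' P'' : Proto At} {e : Ev} {l : List Ev} :
      StepP s P e P' → StepsP s P' l P'' → StepsP s P (e :: l) P''

def Proto.IsAtom {At : Type} : Proto At → Prop
  | .atom _ => True
  | _ => False

/-- A finite family of channels, each assigned a protocol and partitioned
into domain channels and codomain channels. -/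
structure Setting (At Chan : Type) where
  active : Set Chan
  finite : active.Finite
  side : Chan → Side
  proto : Chan → Proto At

/-- A behaviour: a tuple of channel behaviours, one per channel. -/
abbrev Behav (Chan : Type) : Type := Chan → List Ev

variable {At Chan M : Type}

/-- The behaviour `p` reaches the frontier state `P` on channel `c`. -/
def Setting.Reaches (S : Setting At Chan) (p : Behav Chan) (c : Chan) (P : Proto At) : Prop :=
  StepsP (S.side c) (S.proto c) (p c) P

/-- `p` is a legal behaviour for the setting `S`. -/
def Setting.IsBehav (S : Setting At Chan) (p : Behav Chan) : Prop :=
  (∀ c ∉ S.active, p c = []) ∧ ∀ c ∈ S.active, ∃ P, S.Reaches p c P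

/-- An antecedent behaviour: every frontier state has flow or sink role. -/
def Setting.Antecedent (S : Setting At Chan) (p : Behav Chan) : Prop :=
  S.IsBehav p ∧ ∀ c ∈ S.active, ∀ P, S.Reaches p c P → role (S.side c) P ≠ .src

/-- A saturated behaviour: every frontier state is atomic, has sink role,
or is an output state with flow role. -/
def Setting.Saturated (S : Setting At Chan) (p : Behav Chan) : Prop :=
  S.IsBehav p ∧ ∀ c ∈ S.active, ∀ P, S.Reaches p c P →
    P.IsAtom ∨ role (S.side c) P = .snk ∨
      (expects (S.side c) P = some Dir.out ∧ role (S.side c) P = .flow)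

/-- `p ⊑ q`: componentwise prefix of behaviours. -/
def BPrefix (p q : Behav Chan) : Prop := ∀ c, p c <+: q c

/-- `p ⊑_i q`: `p` is a prefix of `q` and all intervening events are inputs. -/
def BPrefixI (p q : Behav Chan) : Prop :=
  ∀ c, ∃ r : List Ev, q c = p c ++ r ∧ ∀ e ∈ r, e.1 = Dir.inp

/-- Compatibility `p ⌣ q` of behaviours. -/
def Compat (p q : Behav Chan) : Prop := ∀ c, p c <+: q c ∨ q c <+: p c

/-- The join `p ⊔ q` of (compatible) behaviours: the longer component on each
channel. -/
def bjoin (p q : Behav Chan) : Behav Chan :=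
  fun c => if (p c).length ≤ (q c).length then q c else p c

/-- The empty behaviour. -/
def emptyB : Behav Chan := fun _ => []

/-- `p * e` on channel `c`: append the event `e` at the end of the channel
behaviour of `c`. -/
def bapp [DecidableEq Chan] (p : Behav Chan) (c : Chan) (e : Ev) : Behav Chan :=
  Function.update p c (p c ++ [e])

/-- `e * p` on channel `c`: prepend the event `e` at the beginning of the
channel behaviour of `c`. -/
def bpre [DecidableEq Chan] (c : Chan) (e : Ev) (p : Behav Chan) : Behav Chan :=
  Function.update p c (e :: p c)

/-- The conclusion of an entailment: an output event `ᾱ[a]` or an atomic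
morphism. -/
inductive Concl (Chan M : Type) : Type where
  | out : Chan → ℕ → Concl Chan M
  | mor : M → Concl Chan M

/-- An entailment: an antecedent behaviour together with a conclusion. -/
abbrev Ent (Chan M : Type) : Type := Behav Chan × Concl Chan M

/-- The event `e` is a legal next event on channel `c` given the behaviour
`p`. -/
def Setting.CanStep (S : Setting At Chan) (p : Behav Chan) (c : Chan) (e : Ev) : Prop :=
  ∃ P P', S.Reaches p c P ∧ StepP (S.side c) P e P'

/-- Validity of an entailment: the antecedent is an antecedent behaviour and
the conclusion is a legal output event, resp. an atomic morphism on the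
(all-atomic) frontier. -/
def Setting.ValidEnt (S : Setting At Chan) : Ent Chan M → Prop
  | (p, .out α a) => S.Antecedent p ∧ α ∈ S.active ∧ S.CanStep p α (Dir.out, a)
  | (p, .mor _) => S.Antecedent p ∧ ∀ c ∈ S.active, ∃ A, S.Reaches p c (.atom A)

/-- A set of entailments. -/
def EntSet (S : Setting At Chan) (Q : Set (Ent Chan M)) : Prop :=
  ∀ e ∈ Q, S.ValidEnt e

/-- All output events occurring in `p` are `Q`-justified. -/
def Justified [DecidableEq Chan] (S : Setting At Chan) (Q : Set (Ent Chan M))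
    (p : Behav Chan) : Prop :=
  ∀ c ∈ S.active, ∀ (l : List Ev) (a : ℕ) (r : List Ev), p c = l ++ (Dir.out, a) :: r →
    ∃ u : Behav Chan, (u, Concl.out c a) ∈ Q ∧ u c = l ∧ BPrefix (bapp u c (Dir.out, a)) p

/-- A `Q`-preantecedent: a `Q`-justified antecedent behaviour. -/
def Preant [DecidableEq Chan] (S : Setting At Chan) (Q : Set (Ent Chan M))
    (p : Behav Chan) : Prop :=
  S.Antecedent p ∧ Justified S Q p

/-- A `Q`-antecedent: the antecedent of some entailment of `Q`. -/
def QAnt (Q : Set (Ent Chan M)) (p : Behav Chan) : Prop := ∃ x, (p, x) ∈ Q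

section EP

variable [DecidableEq Chan]

/-- EP-1: every `Q`-antecedent is `Q`-justified. -/
def EP1 (S : Setting At Chan) (Q : Set (Ent Chan M)) : Prop :=
  ∀ p, QAnt Q p → Justified S Q p

/-- EP-2: compatible entailments with equal channel behaviour on the output
channel conclude the same output event. -/
def EP2 (Q : Set (Ent Chan M)) : Prop :=
  ∀ (p q : Behav Chan) (α : Chan) (a b : ℕ),
    (p, Concl.out α a) ∈ Q → (q, Concl.out α b) ∈ Q → p α = q α → Compat p q → a = b

/-- EP-3: between a preantecedent and a saturated preantecedent above it along
inputs there is a `Q`-antecedent. -/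
def EP3 (S : Setting At Chan) (Q : Set (Ent Chan M)) : Prop :=
  ∀ p q, Preant S Q p → Preant S Q q → S.Saturated q → BPrefixI p q →
    ∃ p', QAnt Q p' ∧ BPrefixI p p' ∧ BPrefixI p' q

/-- EP-4. -/
def EP4 (Q : Set (Ent Chan M)) : Prop :=
  ∀ (α β : Chan) (a b : ℕ) (p q : Behav Chan), α ≠ β →
    (p, Concl.out α a) ∈ Q → (q, Concl.out β b) ∈ Q → p α = q α → BPrefix p q →
    (bapp q α (Dir.out, a), Concl.out β b) ∈ Q

/-- EP-5. -/
def EP5 (S : Setting At Chan) (Q : Set (Ent Chan M)) : Prop :=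
  ∀ (α β : Chan) (a b : ℕ) (p : Behav Chan), α ≠ β →
    (p, Concl.out α a) ∈ Q → β ∈ S.active → S.CanStep p β (Dir.inp, b) →
    (bapp p β (Dir.inp, b), Concl.out α a) ∈ Q

/-- EP-6. -/
def EP6 (Q : Set (Ent Chan M)) : Prop :=
  ∀ (α β : Chan) (a b : ℕ) (p : Behav Chan), α ≠ β →
    (bapp p β (Dir.out, b), Concl.out α a) ∈ Q → (p, Concl.out α a) ∈ Q

/-- EP-7. -/
def EP7 (S : Setting At Chan) (Q : Set (Ent Chan M)) : Prop :=
  ∀ (α β : Chan) (a : ℕ) (p : Behav Chan), α ≠ β → Preant S Q p → β ∈ S.active →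
    (∃ b, S.CanStep p β (Dir.inp, b)) →
    (∀ b, S.CanStep p β (Dir.inp, b) → (bapp p β (Dir.inp, b), Concl.out α a) ∈ Q) →
    (p, Concl.out α a) ∈ Q

/-- A proto-process: a set of entailments satisfying EP-1, EP-2 and EP-3. -/
def ProtoProcess (S : Setting At Chan) (Q : Set (Ent Chan M)) : Prop :=
  EntSet S Q ∧ EP1 S Q ∧ EP2 Q ∧ EP3 S Q

/-- An extensional process: a set of entailments satisfying EP-1 – EP-7. -/
def ExtProcess (S : Setting At Chan) (Q : Set (Ent Chan M)) : Prop :=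
  ProtoProcess S Q ∧ EP4 Q ∧ EP5 S Q ∧ EP6 Q ∧ EP7 S Q

end EP

section Evolution

variable {At Chan M : Type} {S : Setting At Chan} {p : Behav Chan}

lemma StepP.det {s : Side} {P P₁ P₂ : Proto At} {e : Ev}
    (h₁ : StepP s P e P₁) (h₂ : StepP s P e P₂) : P₁ = P₂ :=
  Option.some_injective _ (h₁.2.2.1.symm.trans h₂.2.2.1)

lemma StepsP.det {s : Side} {P P₁ P₂ : Proto At} {l : List Ev}
    (h₁ : StepsP s P l P₁) (h₂ : StepsP s P l P₂) : P₁ = P₂ := by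
  induction h₁ generalizing P₂ with
  | nil => cases h₂; rfl
  | cons hs _ ih =>
    cases h₂ with
    | cons hs' ht' => exact ih (hs.det hs' ▸ ht')

lemma StepsP.snoc {s : Side} {P P' P'' : Proto At} {l : List Ev} {e : Ev}
    (h : StepsP s P l P') (h' : StepP s P' e P'') : StepsP s P (l ++ [e]) P'' := by
  induction h with
  | nil => exact .cons h' (.nil _)
  | cons hs _ ih => exact .cons hs (ih h')

lemma mem_rolesD {Xs : List (Proto At)} {r : Role} :
    r ∈ rolesD Xs ↔ ∃ X ∈ Xs, roleD X = r := by
  induction Xs with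
  | nil => simp [rolesD]
  | cons X Xs ih => simp [rolesD, ih, eq_comm]

lemma Role.swap_eq_flow {r : Role} : r.swap = .flow ↔ r = .flow := by
  cases r <;> simp [Role.swap]

lemma Role.swap_ne_src {r : Role} : r.swap ≠ .src ↔ r ≠ .snk := by
  cases r <;> simp [Role.swap]

lemma exists_mem_roleD_ne_src {Xs : List (Proto At)} (h : sumRole (rolesD Xs) ≠ .src) :
    ∃ X ∈ Xs, roleD X ≠ .src := by
  by_contra! hXs
  exact h <| if_pos fun r hr => by
    obtain ⟨X, hX, rfl⟩ := mem_rolesD.1 hr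
    exact hXs X hX

lemma exists_mem_roleD_ne_snk {Xs : List (Proto At)} (h : prodRole (rolesD Xs) ≠ .snk) :
    ∃ X ∈ Xs, roleD X ≠ .snk := by
  by_contra! hXs
  exact h <| if_pos fun r hr => by
    obtain ⟨X, hX, rfl⟩ := mem_rolesD.1 hr
    exact hXs X hX

lemma exists_inp_stepP_of_mem {s : Side} {Xs : List (Proto At)} {P X : Proto At}
    (hf : role s P = .flow) (he : expects s P = some .inp) (hP : ∀ i, P.next i = Xs[i]?)
    (hX : X ∈ Xs) (hr : role s X ≠ .src) : ∃ b P', StepP s P (.inp, b) P' := by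
  obtain ⟨b, hb⟩ := List.getElem?_of_mem hX
  exact ⟨b, X, hf, he, (hP b).trans hb, by simp, fun _ => hr⟩

lemma exists_inp_stepP {s : Side} {P : Proto At}
    (hf : role s P = .flow) (he : expects s P = some .inp) :
    ∃ b P', StepP s P (.inp, b) P' := by
  cases s <;> cases P <;> simp only [expects, reduceCtorEq, Option.some.injEq] at he
  case dom.sum Xs =>
    have hflow : sumRole (rolesD Xs) = .flow := hf
    obtain ⟨X, hX, hr⟩ := exists_mem_roleD_ne_src (by rw [hflow]; decide)
    exact exists_inp_stepP_of_mem hf rfl (fun _ => rfl) hX hr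
  case cod.prod Xs =>
    have hflow : prodRole (rolesD Xs) = .flow := Role.swap_eq_flow.1 hf
    obtain ⟨X, hX, hr⟩ := exists_mem_roleD_ne_snk (by rw [hflow]; decide)
    exact exists_inp_stepP_of_mem hf rfl (fun _ => rfl) hX (Role.swap_ne_src.2 hr)

lemma Setting.Antecedent.exists_frontier_inp_stepP (hp : S.Antecedent p)
    (hns : ¬ S.Saturated p) :
    ∃ c ∈ S.active, ∃ P b P', S.Reaches p c P ∧ StepP (S.side c) P (.inp, b) P' := by
  have hunsat : ¬ ∀ c ∈ S.active, ∀ P, S.Reaches p c P →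
      P.IsAtom ∨ role (S.side c) P = .snk ∨
        (expects (S.side c) P = some .out ∧ role (S.side c) P = .flow) :=
    fun h => hns ⟨hp.1, h⟩
  push Not at hunsat
  obtain ⟨c, hc, P, hP, hnatom, hnsnk, hnout⟩ := hunsat
  have hflow : role (S.side c) P = .flow := by
    cases h : role (S.side c) P
    exacts [absurd h (hp.2 c hc P hP), absurd h hnsnk, rfl]
  have hinp : expects (S.side c) P = some .inp := by
    cases P with
    | atom => exact absurd trivial hnatom
    | sum | prod => cases h : S.side c <;> simp_all [expects]
  obtain ⟨b, P', hstep⟩ := exists_inp_stepP hflow hinp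
  exact ⟨c, hc, P, b, P', hP, hstep⟩

lemma Proto.sizeOf_lt_of_next {P P' : Proto At} {b : ℕ} (h : P.next b = some P') :
    sizeOf P' < sizeOf P := by
  cases P with
  | atom => simp [Proto.next] at h
  | sum Xs =>
    have := List.sizeOf_lt_of_mem (List.mem_of_getElem? h)
    simp only [Proto.sum.sizeOf_spec]
    omega
  | prod Xs =>
    have := List.sizeOf_lt_of_mem (List.mem_of_getElem? h)
    simp only [Proto.prod.sizeOf_spec]
    omega

lemma StepsP.length_add_sizeOf_le {s : Side} {P P' : Proto At} {l : List Ev}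
    (h : StepsP s P l P') : l.length + sizeOf P' ≤ sizeOf P := by
  induction h with
  | nil => simp
  | cons hs _ ih =>
    have := Proto.sizeOf_lt_of_next hs.2.2.1
    simp only [List.length_cons]
    omega

noncomputable def Setting.totalLength (S : Setting At Chan) (p : Behav Chan) : ℕ :=
  ∑ c ∈ S.finite.toFinset, (p c).length

noncomputable def Setting.protoSize (S : Setting At Chan) : ℕ :=
  ∑ c ∈ S.finite.toFinset, sizeOf (S.proto c)

lemma Setting.IsBehav.totalLength_le (hp : S.IsBehav p) : S.totalLength p ≤ S.protoSize :=
  Finset.sum_le_sum fun c hc => by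
    obtain ⟨P, hP⟩ := hp.2 c (S.finite.mem_toFinset.1 hc)
    have := hP.length_add_sizeOf_le
    omega

lemma BPrefixI.refl (p : Behav Chan) : BPrefixI p p :=
  fun _ => ⟨[], by simp, by simp⟩

lemma BPrefixI.trans {p q r : Behav Chan} (h₁ : BPrefixI p q) (h₂ : BPrefixI q r) :
    BPrefixI p r := by
  intro c
  obtain ⟨u, hu, hui⟩ := h₁ c
  obtain ⟨v, hv, hvi⟩ := h₂ c
  refine ⟨u ++ v, by simp [hv, hu], fun e he => ?_⟩
  rcases List.mem_append.1 he with h | h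
  exacts [hui e h, hvi e h]

lemma append_singleton_eq_append_cons {xs l r : List Ev} {y z : Ev} (hzy : z ≠ y)
    (h : xs ++ [y] = l ++ z :: r) : ∃ r', xs = l ++ z :: r' := by
  rcases List.eq_nil_or_concat r with rfl | ⟨r', w, rfl⟩
  · exact absurd (List.append_inj' h rfl).2 (by simpa using hzy.symm)
  · rw [List.concat_eq_append, ← List.cons_append, ← List.append_assoc] at h
    exact ⟨r', (List.append_inj' h rfl).1⟩

section Bapp

variable [DecidableEq Chan] {c : Chan} {e : Ev}

lemma bapp_self : bapp p c e c = p c ++ [e] := Function.update_self _ _ _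

lemma bapp_of_ne {c' : Chan} (h : c' ≠ c) : bapp p c e c' = p c' :=
  Function.update_of_ne h _ _

lemma bprefix_bapp : BPrefix p (bapp p c e) := by
  intro c'
  by_cases h : c' = c
  · subst h; rw [bapp_self]; exact List.prefix_append _ _
  · rw [bapp_of_ne h]

lemma bprefixI_bapp_inp {b : ℕ} : BPrefixI p (bapp p c (.inp, b)) := by
  intro c'
  by_cases h : c' = c
  · subst h; exact ⟨_, bapp_self, by simp⟩
  · exact ⟨[], by simp [bapp_of_ne h], by simp⟩

lemma Setting.totalLength_bapp (hc : c ∈ S.active) :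
    S.totalLength (bapp p c e) = S.totalLength p + 1 := by
  have hc' := S.finite.mem_toFinset.2 hc
  unfold Setting.totalLength
  rw [← Finset.add_sum_erase _ _ hc', ← Finset.add_sum_erase _ _ hc', bapp_self,
    Finset.sum_congr rfl fun c' hc' => by rw [bapp_of_ne (Finset.ne_of_mem_erase hc')]]
  simp only [List.length_append, List.length_singleton]
  ring

lemma Justified.bapp_inp {Q : Set (Ent Chan M)} {b : ℕ}
    (hp : Justified S Q p) : Justified S Q (bapp p c (.inp, b)) := by
  intro c' hc' l a r hdec
  have hpre : ∃ r', p c' = l ++ (.out, a) :: r' := by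
    by_cases h : c' = c
    · subst h
      rw [bapp_self] at hdec
      exact append_singleton_eq_append_cons (by simp) hdec
    · exact ⟨r, by rwa [bapp_of_ne h] at hdec⟩
  obtain ⟨r', hr'⟩ := hpre
  obtain ⟨u, huQ, huc, hup⟩ := hp c' hc' l a r' hr'
  exact ⟨u, huQ, huc, fun c'' => (hup c'').trans (bprefix_bapp c'')⟩

lemma Setting.Antecedent.bapp_inp {P P' : Proto At} {b : ℕ} (hp : S.Antecedent p)
    (hc : c ∈ S.active) (hP : S.Reaches p c P) (hstep : StepP (S.side c) P (.inp, b) P') :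
    S.Antecedent (bapp p c (.inp, b)) := by
  have hreach : S.Reaches (bapp p c (.inp, b)) c P' := by
    unfold Setting.Reaches; rw [bapp_self]; exact hP.snoc hstep
  have hreach_ne {c' : Chan} (h : c' ≠ c) {P'' : Proto At} :
      S.Reaches (bapp p c (.inp, b)) c' P'' ↔ S.Reaches p c' P'' := by
    unfold Setting.Reaches; rw [bapp_of_ne h]
  obtain ⟨⟨hnil, hex⟩, hsrc⟩ := hp
  refine ⟨⟨fun c' hc' => ?_, fun c' hc' => ?_⟩, fun c' hc' P'' hr => ?_⟩
  · rw [bapp_of_ne (ne_of_mem_of_not_mem hc hc').symm]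
    exact hnil c' hc'
  · by_cases h : c' = c
    · exact ⟨P', h ▸ hreach⟩
    · obtain ⟨P'', hP''⟩ := hex c' hc'
      exact ⟨P'', (hreach_ne h).2 hP''⟩
  · by_cases h : c' = c
    · subst h
      rw [hr.det hreach]
      exact hstep.2.2.2.2 rfl
    · exact hsrc c' hc' P'' ((hreach_ne h).1 hr)

lemma Preant.exists_bapp_inp {Q : Set (Ent Chan M)} (hp : Preant S Q p)
    (hns : ¬ S.Saturated p) : ∃ c ∈ S.active, ∃ b, Preant S Q (bapp p c (.inp, b)) := by
  obtain ⟨c, hc, P, b, P', hP, hstep⟩ := hp.1.exists_frontier_inp_stepP hns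
  exact ⟨c, hc, b, hp.1.bapp_inp hc hP hstep, hp.2.bapp_inp⟩

end Bapp

end Evolution

theorem preant_evolves_to_saturated {At Chan M : Type} [DecidableEq Chan]
    (S : Setting At Chan) (Q : Set (Ent Chan M)) :
    ∀ p, Preant S Q p → ∃ q, Preant S Q q ∧ S.Saturated q ∧ BPrefixI p q := by
  intro p hp
  induction p using (measure fun p => S.protoSize - S.totalLength p).wf.induction with
  | h p ih =>
    by_cases hsat : S.Saturated p
    · exact ⟨p, hp, hsat, .refl p⟩
    obtain ⟨c, hc, b, hp'⟩ := hp.exists_bapp_inp hsat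
    have hdecr : S.protoSize - S.totalLength (bapp p c (.inp, b)) <
        S.protoSize - S.totalLength p := by
      have := hp'.1.1.totalLength_le
      rw [Setting.totalLength_bapp hc] at this ⊢
      omega
    obtain ⟨q, hq, hsat', hpq⟩ := ih _ hdecr hp'
    exact ⟨q, hq, hsat', bprefixI_bapp_inp.trans hpq⟩

end Stmt7
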